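/- arXiv:1904.02759 — 2 statements merged into one kernel-verified Lean document; each statement's English description precedes it below -/
import Mathlib

section
/- With the dumbbell set D as above, one has λ₀(D) = 2 and δ(D) = √2 − 1 + 2/π, and consequently δ(D)/λ₀(D)² = (√2 − 1)/4 + 1/(2π) ≈ 0.26. -/
open MeasureTheory Metric

/-- A point of the Euclidean plane. -/
noncomputable def pt (a b : ℝ) : EuclideanSpace ℝ (Fin 2) := WithLp.toLp 2 ![a, b]

/-- The dumbbell: two closed disks of area `π/2` (radius `1/√2`) whose centers are
`2 + √2` apart (gap `2` between boundaries), joined by the segment of length `2`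
between their nearest points. -/
noncomputable def dumbbell : Set (EuclideanSpace ℝ (Fin 2)) :=
  closedBall (pt (-(1 + Real.sqrt 2 / 2)) 0) (1 / Real.sqrt 2) ∪
  closedBall (pt (1 + Real.sqrt 2 / 2) 0) (1 / Real.sqrt 2) ∪
  segment ℝ (pt (-1) 0) (pt 1 0)

/-- The barycenter of the dumbbell. -/
noncomputable def dumbbellBary : EuclideanSpace ℝ (Fin 2) :=
  ((volume dumbbell).toReal)⁻¹ • ∫ x in dumbbell, x

/-!
The dumbbell is invariant under `x ↦ -x`, so its barycenter is the origin, and the unit disk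
centred there meets it only in a null set (inside the unit circle and the horizontal axis);
hence `|D Δ B| = |D| + |B| = 2π`.

For `0 < ε ≤ 1/2` the `ε`-neighbourhood of `D` is the union of the two disks enlarged to radius
`ε + 1/√2` and the `ε`-neighbourhood of the bar. The latter contains the box
`[-(1 - 2ε), 1 - 2ε] × [-ε, ε]`, which is disjoint from the enlarged disks, and is contained in
`[-1, 1] × [-ε, ε]` together with two `ε`-disks around the ends of the bar, which lie in the
enlarged disks. Thus `|D_ε| = π + (2√2π + 4)ε + O(ε²)`, so the Minkowski perimeter is
`2√2π + 4`.
-/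

open Real Set Filter Topology
open scoped symmDiff

theorem setIntegral_id_eq_zero_of_neg_eq {E : Type*} [NormedAddCommGroup E] [NormedSpace ℝ E]
    [MeasurableSpace E] [MeasurableNeg E] (μ : Measure E) [μ.IsNegInvariant] {s : Set E}
    (hs : -s = s) : ∫ x in s, x ∂μ = 0 := by
  have h := (Measure.measurePreserving_neg μ).setIntegral_preimage_emb measurableEmbedding_neg
    (fun x => x) s
  rw [Set.neg_preimage, hs, integral_neg] at h
  have h2 : (2 : ℝ) • ∫ x in s, x ∂μ = 0 := by rw [two_smul]; nth_rw 1 [← h]; exact neg_add_cancel _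
  exact (smul_eq_zero.mp h2).resolve_left two_ne_zero

theorem measure_symmDiff_eq_add_of_inter_null {α : Type*} [MeasurableSpace α] {μ : Measure α}
    {s t : Set α} (hs : NullMeasurableSet s μ) (ht : NullMeasurableSet t μ)
    (h : μ (s ∩ t) = 0) : μ (s ∆ t) = μ s + μ t := by
  rw [measure_symmDiff_eq hs ht, measure_sdiff_null' h, measure_sdiff_null' (by rwa [inter_comm])]

theorem closedBall_inter_closedBall_subset_sphere {α : Type*} [PseudoMetricSpace α] {a b : α}
    {R r : ℝ} (h : dist a b = R + r) : closedBall a R ∩ closedBall b r ⊆ sphere a R := by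
  rintro x ⟨hxa, hxb⟩
  have := dist_triangle_left a b x
  rw [mem_closedBall] at hxa hxb
  rw [mem_sphere]
  linarith

theorem tendsto_nhdsGT_of_linear_bounds {f : ℝ → ℝ} {a b c : ℝ}
    (hf : ∀ᶠ ε in 𝓝[>] 0, a + b * ε ≤ f ε ∧ f ε ≤ a + c * ε) : Tendsto f (𝓝[>] 0) (𝓝 a) := by
  have hlin (k : ℝ) : Tendsto (fun ε => a + k * ε) (𝓝[>] 0) (𝓝 a) :=
    tendsto_nhdsWithin_of_tendsto_nhds
      ((continuous_const.add (continuous_const.mul continuous_id)).tendsto' 0 a (by simp))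
  exact tendsto_of_tendsto_of_tendsto_of_le_of_le' (hlin b) (hlin c)
    (hf.mono fun _ h => h.1) (hf.mono fun _ h => h.2)

theorem isCompact_segment {E : Type*} [NormedAddCommGroup E] [NormedSpace ℝ E] (a b : E) :
    IsCompact (segment ℝ a b) := by
  rw [← convexHull_pair]
  exact (toFinite _).isCompact_convexHull ℝ

section Plane

@[simp] lemma pt_apply_zero (a b : ℝ) : pt a b 0 = a := rfl

@[simp] lemma pt_apply_one (a b : ℝ) : pt a b 1 = b := rfl

lemma eq_pt (x : EuclideanSpace ℝ (Fin 2)) : x = pt (x 0) (x 1) := by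
  ext i; fin_cases i <;> rfl

lemma neg_pt (a b : ℝ) : -pt a b = pt (-a) (-b) := by
  ext i; fin_cases i <;> rfl

lemma dist_pt_zero_pt_zero (a c : ℝ) : dist (pt a 0) (pt c 0) = |a - c| := by
  simp [EuclideanSpace.dist_eq, Fin.sum_univ_two, Real.sqrt_sq_eq_abs, Real.dist_eq]

lemma mem_closedBall_pt_iff {c r : ℝ} (hr : 0 ≤ r) {x : EuclideanSpace ℝ (Fin 2)} :
    x ∈ closedBall (pt c 0) r ↔ (x 0 - c) ^ 2 + x 1 ^ 2 ≤ r ^ 2 := by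
  rw [mem_closedBall, EuclideanSpace.dist_eq, Real.sqrt_le_left hr, Fin.sum_univ_two]
  simp [Real.dist_eq, sq_abs]

lemma volume_closedBall_eq_ofReal (x : EuclideanSpace ℝ (Fin 2)) {r : ℝ} (hr : 0 ≤ r) :
    volume (closedBall x r) = ENNReal.ofReal (π * r ^ 2) := by
  rw [EuclideanSpace.volume_closedBall_fin_two, ← ENNReal.ofReal_pow hr,
    ← ENNReal.ofReal_mul (by positivity), mul_comm]

lemma volume_setOf_apply_mem {s t : Set ℝ} (hs : MeasurableSet s) (ht : MeasurableSet t) :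
    volume {x : EuclideanSpace ℝ (Fin 2) | x 0 ∈ s ∧ x 1 ∈ t} = volume s * volume t := by
  have hst : MeasurableSet (univ.pi ![s, t]) :=
    MeasurableSet.univ_pi fun i => by fin_cases i <;> assumption
  have hpre : {x : EuclideanSpace ℝ (Fin 2) | x 0 ∈ s ∧ x 1 ∈ t} =
      (MeasurableEquiv.toLp 2 (Fin 2 → ℝ)).symm ⁻¹' univ.pi ![s, t] := by
    ext x
    simp [Fin.forall_fin_two]
  rw [hpre, (EuclideanSpace.volume_preserving_symm_measurableEquiv_toLp (Fin 2)).measure_preimage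
    hst.nullMeasurableSet, volume_pi_pi, Fin.prod_univ_two]
  rfl

lemma volume_setOf_apply_one_eq_zero : volume {x : EuclideanSpace ℝ (Fin 2) | x 1 = 0} = 0 := by
  simpa using volume_setOf_apply_mem MeasurableSet.univ (measurableSet_singleton (0 : ℝ))

def box (a b : ℝ) : Set (EuclideanSpace ℝ (Fin 2)) := {x | x 0 ∈ Icc (-a) a ∧ x 1 ∈ Icc (-b) b}

lemma measurableSet_box (a b : ℝ) : MeasurableSet (box a b) := by
  unfold box; measurability

lemma volume_box {a : ℝ} (ha : 0 ≤ a) (b : ℝ) :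
    volume (box a b) = ENNReal.ofReal (4 * a * b) := by
  rw [box, volume_setOf_apply_mem measurableSet_Icc measurableSet_Icc, Real.volume_Icc,
    Real.volume_Icc, ← ENNReal.ofReal_mul (by linarith)]
  ring_nf

lemma segment_pt_neg_one_pt_one :
    segment ℝ (pt (-1) 0) (pt 1 0) = {x | x 0 ∈ Icc (-1) 1 ∧ x 1 = 0} := by
  ext x
  constructor
  · rintro ⟨a, b, ha, hb, hab, rfl⟩
    simp only [mem_ofPred_eq, PiLp.add_apply, PiLp.smul_apply, pt_apply_zero, pt_apply_one,
      smul_eq_mul, mem_Icc]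
    refine ⟨⟨by nlinarith, by nlinarith⟩, by ring⟩
  · rintro ⟨⟨h₁, h₂⟩, h₃⟩
    refine ⟨(1 - x 0) / 2, (1 + x 0) / 2, by linarith, by linarith, by ring, ?_⟩
    rw [eq_pt x, h₃]
    ext i; fin_cases i <;> simp; ring

end Plane

section Dumbbell

lemma sqrt_two_div_two_eq_one_div_sqrt_two : √2 / 2 = 1 / √2 := by
  field_simp; simp

lemma one_div_sqrt_two_sq : (1 / √2) ^ 2 = 1 / 2 := by
  rw [div_pow, sq_sqrt zero_le_two, one_pow]

lemma isCompact_dumbbell : IsCompact dumbbell :=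
  ((isCompact_closedBall _ _).union (isCompact_closedBall _ _)).union (isCompact_segment _ _)

lemma measurableSet_dumbbell : MeasurableSet dumbbell :=
  isCompact_dumbbell.isClosed.measurableSet

lemma neg_dumbbell : -dumbbell = dumbbell := by
  have hseg : -segment ℝ (pt (-1) 0) (pt 1 0) = segment ℝ (pt (-1) 0) (pt 1 0) := by
    rw [segment_pt_neg_one_pt_one]
    ext x
    simp [neg_le, le_neg, and_comm]
  rw [dumbbell, union_neg, union_neg, hseg, neg_closedBall, neg_closedBall, neg_pt, neg_pt,
    neg_neg, neg_zero, union_comm (closedBall _ _)]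

lemma dumbbellBary_eq_zero : dumbbellBary = 0 := by
  rw [dumbbellBary, setIntegral_id_eq_zero_of_neg_eq volume neg_dumbbell, smul_zero]

lemma volume_segment_pt_neg_one_pt_one : volume (segment ℝ (pt (-1) 0) (pt 1 0)) = 0 := by
  refine measure_mono_null (fun x hx => ?_) volume_setOf_apply_one_eq_zero
  rw [segment_pt_neg_one_pt_one] at hx
  exact hx.2

lemma volume_dumbbell : volume dumbbell = ENNReal.ofReal π := by
  have hdisj : Disjoint (closedBall (pt (-(1 + √2 / 2)) 0) (1 / √2))
      (closedBall (pt (1 + √2 / 2) 0) (1 / √2)) := by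
    apply closedBall_disjoint_closedBall
    rw [dist_pt_zero_pt_zero, ← sqrt_two_div_two_eq_one_div_sqrt_two,
      abs_of_nonpos (by linarith [sqrt_nonneg 2])]
    linarith
  rw [dumbbell, measure_congr (union_ae_eq_left_of_ae_eq_empty
      (ae_eq_empty.mpr volume_segment_pt_neg_one_pt_one)),
    measure_union hdisj measurableSet_closedBall, volume_closedBall_eq_ofReal _ (by positivity),
    volume_closedBall_eq_ofReal _ (by positivity), one_div_sqrt_two_sq,
    ← ENNReal.ofReal_add (by positivity) (by positivity)]
  ring_nf

lemma volume_dumbbell_inter_closedBall_zero_one :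
    volume (dumbbell ∩ closedBall 0 1) = 0 := by
  refine measure_mono_null ?_ (measure_union_null (Measure.addHaar_sphere volume 0 1)
    volume_setOf_apply_one_eq_zero)
  have hdist (c : ℝ) (hc : |c| = 1 + √2 / 2) :
      dist (0 : EuclideanSpace ℝ (Fin 2)) (pt c 0) = 1 + 1 / √2 := by
    rw [show (0 : EuclideanSpace ℝ (Fin 2)) = pt 0 0 from eq_pt 0, dist_pt_zero_pt_zero]
    simp [hc, sqrt_two_div_two_eq_one_div_sqrt_two]
  rintro x ⟨(hx | hx) | hx, hB⟩
  · exact .inl (closedBall_inter_closedBall_subset_sphere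
      (hdist _ (by rw [abs_neg, abs_of_pos (by positivity)])) ⟨hB, hx⟩)
  · exact .inl (closedBall_inter_closedBall_subset_sphere
      (hdist _ (abs_of_pos (by positivity))) ⟨hB, hx⟩)
  · rw [segment_pt_neg_one_pt_one] at hx
    exact .inr hx.2

lemma volume_dumbbell_symmDiff_closedBall_zero_one :
    volume (dumbbell ∆ closedBall 0 1) = ENNReal.ofReal (2 * π) := by
  rw [measure_symmDiff_eq_add_of_inter_null measurableSet_dumbbell.nullMeasurableSet
      measurableSet_closedBall.nullMeasurableSet volume_dumbbell_inter_closedBall_zero_one,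
    volume_dumbbell, volume_closedBall_eq_ofReal _ zero_le_one,
    ← ENNReal.ofReal_add pi_pos.le (by positivity)]
  ring_nf

end Dumbbell

section Minkowski

lemma cthickening_dumbbell {ε : ℝ} (hε : 0 ≤ ε) :
    cthickening ε dumbbell =
      closedBall (pt (-(1 + √2 / 2)) 0) (ε + 1 / √2) ∪
      closedBall (pt (1 + √2 / 2) 0) (ε + 1 / √2) ∪
      cthickening ε (segment ℝ (pt (-1) 0) (pt 1 0)) := by
  rw [dumbbell, cthickening_union, cthickening_union,
    cthickening_closedBall hε (by positivity), cthickening_closedBall hε (by positivity)]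

lemma cthickening_segment_subset {ε : ℝ} (hε : 0 ≤ ε) :
    cthickening ε (segment ℝ (pt (-1) 0) (pt 1 0)) ⊆
      box 1 ε ∪ closedBall (pt (-1) 0) ε ∪ closedBall (pt 1 0) ε := by
  rw [(isCompact_segment _ _).cthickening_eq_biUnion_closedBall hε]
  refine iUnion₂_subset fun p hp y hyp => ?_
  rw [segment_pt_neg_one_pt_one] at hp
  obtain ⟨⟨hp₁, hp₂⟩, hp₃⟩ := hp
  rw [eq_pt p, hp₃, mem_closedBall_pt_iff hε] at hyp
  rw [mem_union, mem_union, mem_closedBall_pt_iff hε, mem_closedBall_pt_iff hε]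
  rcases le_or_gt (y 0) 1 with h₁ | h₁
  · rcases le_or_gt (-1) (y 0) with h₂ | h₂
    · refine .inl (.inl ⟨⟨h₂, h₁⟩, abs_le_of_sq_le_sq' ?_ hε⟩)
      nlinarith [sq_nonneg (y 0 - p 0)]
    · left; right; nlinarith
  · right; nlinarith

lemma box_subset_cthickening_segment {a : ℝ} (ha : a ≤ 1) (ε : ℝ) :
    box a ε ⊆ cthickening ε (segment ℝ (pt (-1) 0) (pt 1 0)) := by
  rintro x ⟨⟨h₁, h₂⟩, h₃, h₄⟩
  have hx : pt (x 0) 0 ∈ segment ℝ (pt (-1) 0) (pt 1 0) := by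
    rw [segment_pt_neg_one_pt_one]
    exact ⟨⟨by simp; linarith, by simp; linarith⟩, rfl⟩
  refine mem_cthickening_of_dist_le x _ ε _ hx ?_
  rw [← mem_closedBall, mem_closedBall_pt_iff (by linarith)]
  nlinarith

lemma volume_cthickening_dumbbell_le {ε : ℝ} (hε : 0 ≤ ε) :
    volume (cthickening ε dumbbell) ≤ ENNReal.ofReal (2 * π * (ε + 1 / √2) ^ 2 + 4 * ε) := by
  set B₁ := closedBall (pt (-(1 + √2 / 2)) 0) (ε + 1 / √2)
  set B₂ := closedBall (pt (1 + √2 / 2) 0) (ε + 1 / √2)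
  have h₁ : closedBall (pt (-1) 0) ε ⊆ B₁ := by
    refine closedBall_subset_closedBall' ?_
    rw [dist_pt_zero_pt_zero, show (-1 : ℝ) - -(1 + √2 / 2) = √2 / 2 by ring,
      abs_of_pos (by positivity), sqrt_two_div_two_eq_one_div_sqrt_two]
  have h₂ : closedBall (pt 1 0) ε ⊆ B₂ := by
    refine closedBall_subset_closedBall' ?_
    rw [dist_pt_zero_pt_zero, show (1 : ℝ) - (1 + √2 / 2) = -(√2 / 2) by ring, abs_neg,
      abs_of_pos (by positivity), sqrt_two_div_two_eq_one_div_sqrt_two]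
  have hsub : cthickening ε dumbbell ⊆ B₁ ∪ B₂ ∪ box 1 ε := by
    rw [cthickening_dumbbell hε]
    refine union_subset subset_union_left ((cthickening_segment_subset hε).trans ?_)
    exact union_subset (union_subset subset_union_right
      (h₁.trans (subset_union_left.trans subset_union_left)))
      (h₂.trans (subset_union_right.trans subset_union_left))
  calc volume (cthickening ε dumbbell) ≤ volume B₁ + volume B₂ + volume (box 1 ε) :=
        (measure_mono hsub).trans <|
          (measure_union_le _ _).trans (add_le_add_left (measure_union_le _ _) _)
    _ = ENNReal.ofReal (2 * π * (ε + 1 / √2) ^ 2 + 4 * ε) := by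
        rw [volume_closedBall_eq_ofReal _ (by positivity),
          volume_closedBall_eq_ofReal _ (by positivity), volume_box zero_le_one,
          ← ENNReal.ofReal_add (by positivity) (by positivity),
          ← ENNReal.ofReal_add (by positivity) (by positivity)]
        ring_nf

lemma le_volume_cthickening_dumbbell {ε : ℝ} (hε : 0 < ε) (hε' : ε ≤ 1 / 2) :
    ENNReal.ofReal (2 * π * (ε + 1 / √2) ^ 2 + 4 * (1 - 2 * ε) * ε) ≤
      volume (cthickening ε dumbbell) := by
  set B₁ := closedBall (pt (-(1 + √2 / 2)) 0) (ε + 1 / √2)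
  set B₂ := closedBall (pt (1 + √2 / 2) 0) (ε + 1 / √2)
  have hr := sqrt_two_div_two_eq_one_div_sqrt_two
  have hsub : B₁ ∪ B₂ ∪ box (1 - 2 * ε) ε ⊆ cthickening ε dumbbell := by
    rw [cthickening_dumbbell hε.le]
    exact union_subset_union_right _ (box_subset_cthickening_segment (by linarith) ε)
  have hB : Disjoint B₁ B₂ := by
    apply closedBall_disjoint_closedBall
    rw [dist_pt_zero_pt_zero, abs_of_nonpos (by linarith [sqrt_nonneg 2])]
    linarith
  have hBbox : Disjoint (B₁ ∪ B₂) (box (1 - 2 * ε) ε) := by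
    rw [disjoint_left]
    rintro x (hx | hx) ⟨⟨h₁, h₂⟩, -⟩ <;>
    · rw [mem_closedBall_pt_iff (by positivity)] at hx
      nlinarith [sq_nonneg (x 1), sqrt_nonneg 2]
  calc ENNReal.ofReal (2 * π * (ε + 1 / √2) ^ 2 + 4 * (1 - 2 * ε) * ε)
      = volume B₁ + volume B₂ + volume (box (1 - 2 * ε) ε) := by
        rw [volume_closedBall_eq_ofReal _ (by positivity),
          volume_closedBall_eq_ofReal _ (by positivity), volume_box (by linarith),
          ← ENNReal.ofReal_add (by positivity) (by positivity),
          ← ENNReal.ofReal_add (by positivity) (by nlinarith)]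
        ring_nf
    _ = volume (B₁ ∪ B₂ ∪ box (1 - 2 * ε) ε) := by
        rw [measure_union hBbox (measurableSet_box _ _),
          measure_union hB measurableSet_closedBall]
    _ ≤ volume (cthickening ε dumbbell) := measure_mono hsub

lemma two_pi_mul_add_one_div_sqrt_two_sq (ε : ℝ) :
    2 * π * (ε + 1 / √2) ^ 2 = π + (2 * √2 * π) * ε + 2 * π * ε ^ 2 := by
  rw [add_sq, one_div_sqrt_two_sq, ← sqrt_two_div_two_eq_one_div_sqrt_two]
  ring

lemma tendsto_volume_cthickening_dumbbell :
    Tendsto (fun ε => ((volume (cthickening ε dumbbell)).toReal - (volume dumbbell).toReal) / ε)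
      (𝓝[>] 0) (𝓝 (2 * √2 * π + 4)) := by
  refine tendsto_nhdsGT_of_linear_bounds (b := 2 * π - 8) (c := 2 * π) ?_
  filter_upwards [Ioc_mem_nhdsGT one_half_pos] with ε ⟨hε, hε'⟩
  have hfin := (isCompact_dumbbell.cthickening (r := ε)).measure_lt_top (μ := volume)
  have hlow := ENNReal.toReal_mono hfin.ne (le_volume_cthickening_dumbbell hε hε')
  have hup := ENNReal.toReal_le_of_le_ofReal (by positivity)
    (volume_cthickening_dumbbell_le hε.le)
  rw [ENNReal.toReal_ofReal (by nlinarith [pi_pos])] at hlow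
  rw [two_pi_mul_add_one_div_sqrt_two_sq] at hlow hup
  rw [volume_dumbbell, ENNReal.toReal_ofReal pi_pos.le, le_div_iff₀ hε, div_le_iff₀ hε]
  constructor <;> nlinarith

end Minkowski

/-- For the dumbbell `D` one has `λ₀(D) = 2`, `δ(D) = √2 - 1 + 2/π`, and hence
`δ(D)/λ₀(D)² = (√2 - 1)/4 + 1/(2π)`. -/
theorem stmt_10 (P : ℝ)
    (hP : Filter.Tendsto
      (fun ε : ℝ => ((volume (cthickening ε dumbbell)).toReal - (volume dumbbell).toReal) / ε)
      (nhdsWithin 0 (Set.Ioi 0)) (nhds P)) :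
    (volume ((dumbbell \ closedBall dumbbellBary 1) ∪
        (closedBall dumbbellBary 1 \ dumbbell))).toReal / (volume dumbbell).toReal = 2 ∧
    P / (2 * Real.pi) - 1 = Real.sqrt 2 - 1 + 2 / Real.pi ∧
    (P / (2 * Real.pi) - 1) /
      ((volume ((dumbbell \ closedBall dumbbellBary 1) ∪
          (closedBall dumbbellBary 1 \ dumbbell))).toReal / (volume dumbbell).toReal) ^ 2
      = (Real.sqrt 2 - 1) / 4 + 1 / (2 * Real.pi) := by
  have hvol : (volume dumbbell).toReal = π := by
    rw [volume_dumbbell, ENNReal.toReal_ofReal pi_pos.le]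
  have hasymm : (volume ((dumbbell \ closedBall dumbbellBary 1) ∪
      (closedBall dumbbellBary 1 \ dumbbell))).toReal / (volume dumbbell).toReal = 2 := by
    rw [← Set.symmDiff_def, dumbbellBary_eq_zero, volume_dumbbell_symmDiff_closedBall_zero_one,
      hvol, ENNReal.toReal_ofReal (by positivity)]
    field_simp
  have hδ : P / (2 * π) - 1 = √2 - 1 + 2 / π := by
    rw [tendsto_nhds_unique hP tendsto_volume_cthickening_dumbbell]
    field_simp
    ring
  refine ⟨hasymm, hδ, ?_⟩
  rw [hasymm, hδ]
  field_simp
  ring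
end

section
/- For every n ≥ 2, let Ω_n ⊂ ℝ² be the disjoint union of the disk centered at (2,0) with radius R_n = 1 − 1/n and the disk centered at (−2(n−1)²/(2n−1), 0) with radius r_n = √((2n−1))/n. Then |Ω_n| = π, the barycenter of Ω_n is the origin, and the (De Giorgi) isoperimetric deficit δ(Ω_n) = (P(Ω_n) − 2π)/(2π) = R_n + r_n − 1 tends to 0 as n → ∞, while the barycentric asymmetry λ₀(Ω_n) = |Ω_n Δ B|/π (B the unit disk centered at the origin) satisfies λ₀(Ω_n) = 2 for all large n. Hence δ(Ω_n)/λ₀(Ω_n)² → 0. -/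
open MeasureTheory Metric

noncomputable def Rn (n : ℕ) : ℝ := 1 - 1 / (n : ℝ)

noncomputable def rn (n : ℕ) : ℝ := Real.sqrt (2 * (n : ℝ) - 1) / (n : ℝ)

/-- Fuglede's counterexample: the union of two disjoint disks. -/
noncomputable def Ωn (n : ℕ) : Set (EuclideanSpace ℝ (Fin 2)) :=
  closedBall (pt 2 0) (Rn n) ∪
  closedBall (pt (-(2 * ((n : ℝ) - 1) ^ 2 / (2 * (n : ℝ) - 1))) 0) (rn n)

/-!
The two disks are disjoint, so area, barycenter and perimeter are additive over them, and the
identities `Rₙ² + rₙ² = 1` and `2 Rₙ² = dₙ rₙ²` (with `-dₙ` the abscissa of the small centre)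
give area `π` and barycenter `0`. The analytic input is that a circle of radius `R` has
one-dimensional Hausdorff measure `2πR`: at most, because it is an `R`-Lipschitz image of an
interval of length `2π`; at least, because a connected arc has measure at least the distance
between its endpoints, so the circle has measure at least the perimeter `2πR sinc (π / n)` of
each inscribed regular `n`-gon. For `n ≥ 4` both disks lie outside the unit disk, so the
symmetric difference has area `2π`, while the deficit `Rₙ + rₙ - 1 = rₙ - 1 / n` tends to `0`.
-/

open Real Set Filter Topology

section HausdorffLength

variable {X : Type*} [MetricSpace X] [MeasurableSpace X] [BorelSpace X]

theorem IsPreconnected.edist_le_hausdorffMeasure_one {S : Set X} (hS : IsPreconnected S)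
    {a b : X} (ha : a ∈ S) (hb : b ∈ S) : edist a b ≤ μH[1] S := by
  have hlip : LipschitzWith 1 (dist a) := LipschitzWith.dist_right a
  have hIcc : Icc 0 (dist a b) ⊆ dist a '' S :=
    (hS.image _ hlip.continuous.continuousOn).Icc_subset ⟨a, ha, dist_self a⟩ ⟨b, hb, rfl⟩
  calc edist a b = μH[1] (Icc 0 (dist a b)) := by
        rw [hausdorffMeasure_real, Real.volume_Icc, sub_zero, edist_dist]
    _ ≤ μH[1] (dist a '' S) := measure_mono hIcc
    _ ≤ μH[1] S := by simpa using hlip.hausdorffMeasure_image_le zero_le_one S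

theorem sum_edist_le_hausdorffMeasure_image {f : ℝ → X} (hf : Continuous f) {t : ℕ → ℝ}
    (ht : Monotone t) {n : ℕ} (hinj : InjOn f (Ico (t 0) (t n))) :
    ∑ k ∈ Finset.range n, edist (f (t k)) (f (t (k + 1))) ≤ μH[1] (f '' Ico (t 0) (t n)) := by
  have := Measure.nullSingletonClass_hausdorff X one_pos
  have hsub : ∀ k ∈ Finset.range n, Ico (t k) (t (k + 1)) ⊆ Ico (t 0) (t n) := fun k hk =>
    Ico_subset_Ico (ht k.zero_le) (ht (Finset.mem_range.1 hk))
  have himage : ∀ k, f '' Icc (t k) (t (k + 1)) =ᵐ[μH[1]] f '' Ico (t k) (t (k + 1)) := by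
    intro k
    rw [← Ico_insert_right (ht k.le_succ), image_insert_eq]
    exact insert_ae_eq_self _ _
  calc ∑ k ∈ Finset.range n, edist (f (t k)) (f (t (k + 1)))
      ≤ ∑ k ∈ Finset.range n, μH[1] (f '' Ico (t k) (t (k + 1))) := by
        refine Finset.sum_le_sum fun k _ => ?_
        rw [← measure_congr (himage k)]
        exact (isPreconnected_Icc.image f hf.continuousOn).edist_le_hausdorffMeasure_one
          (mem_image_of_mem f (left_mem_Icc.2 (ht k.le_succ)))
          (mem_image_of_mem f (right_mem_Icc.2 (ht k.le_succ)))
    _ = μH[1] (⋃ k ∈ Finset.range n, f '' Ico (t k) (t (k + 1))) := by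
        refine (measure_biUnion_finset₀ ?_ fun k _ => ?_).symm
        · intro j hj k hk hjk
          have hIco : Disjoint (Ico (t j) (t (j + 1))) (Ico (t k) (t (k + 1))) :=
            ht.pairwise_disjoint_on_Ico_succ hjk
          refine Disjoint.aedisjoint ?_
          rw [disjoint_iff_inter_eq_empty, ← hinj.image_inter (hsub j hj) (hsub k hk),
            hIco.inter_eq, image_empty]
        · exact ((isCompact_Icc.image hf).isClosed.measurableSet.nullMeasurableSet).congr
            (himage k)
    _ ≤ μH[1] (f '' Ico (t 0) (t n)) :=
        measure_mono (iUnion₂_subset fun k hk => image_mono (hsub k hk))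

end HausdorffLength

namespace Complex

theorem dist_circleMap_circleMap (c : ℂ) (R a b : ℝ) :
    dist (circleMap c R a) (circleMap c R b) = |R| * |2 * Real.sin ((b - a) / 2)| := by
  have h : circleMap c R b - circleMap c R a = R * exp (a * I) * (exp (I * (b - a : ℝ)) - 1) := by
    simp only [circleMap, mul_sub, mul_one, mul_assoc _ (exp _), ← exp_add]
    push_cast
    ring_nf
  rw [dist_comm, dist_eq, h, norm_mul, norm_mul, norm_exp_I_mul_ofReal_sub_one, norm_real,
    norm_exp_ofReal_mul_I, Real.norm_eq_abs, Real.norm_eq_abs, mul_one]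

/-- Inscribed regular `n`-gons have perimeter `2πR sinc (π / n)`. -/
theorem ofReal_mul_sinc_le_hausdorffMeasure_sphere (c : ℂ) {R : ℝ} (hR : 0 < R) {n : ℕ}
    (hn : n ≠ 0) : ENNReal.ofReal (2 * π * R * sinc (π / n)) ≤ μH[1] (sphere c R) := by
  have hn' : (0 : ℝ) < n := by positivity
  set t : ℕ → ℝ := fun k => 2 * π / n * k
  have ht : Monotone t := fun j k hjk =>
    mul_le_mul_of_nonneg_left (Nat.cast_le.2 hjk) (by positivity)
  have hside : ∀ k, edist (circleMap c R (t k)) (circleMap c R (t (k + 1)))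
      = ENNReal.ofReal (2 * R * Real.sin (π / n)) := by
    intro k
    have hsin : 0 ≤ Real.sin (π / n) :=
      sin_nonneg_of_nonneg_of_le_pi (by positivity) (div_le_self pi_pos.le (by exact_mod_cast hn'))
    rw [edist_dist, dist_circleMap_circleMap, show (t (k + 1) - t k) / 2 = π / n by
      simp only [t]; push_cast; ring, abs_of_pos hR, abs_of_nonneg (by positivity)]
    ring_nf
  have h0 : t 0 = 0 := by simp [t]
  have hn2 : t n = 2 * π := by simp only [t]; field_simp
  calc ENNReal.ofReal (2 * π * R * sinc (π / n))
      = ∑ k ∈ Finset.range n, edist (circleMap c R (t k)) (circleMap c R (t (k + 1))) := by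
        rw [Finset.sum_congr rfl fun k _ => hside k, Finset.sum_const, Finset.card_range,
          nsmul_eq_mul, ← ENNReal.ofReal_natCast, ← ENNReal.ofReal_mul hn'.le,
          sinc_of_ne_zero (by positivity)]
        congr 1
        field_simp
    _ ≤ μH[1] (circleMap c R '' Ico (t 0) (t n)) :=
        sum_edist_le_hausdorffMeasure_image (continuous_circleMap c R) ht
          (injOn_circleMap_of_abs_sub_le' hR.ne' (by rw [h0, hn2, sub_zero]))
    _ ≤ μH[1] (sphere c R) := by
        refine measure_mono ?_
        rintro _ ⟨θ, -, rfl⟩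
        exact circleMap_mem_sphere c hR.le θ

theorem hausdorffMeasure_sphere (c : ℂ) {R : ℝ} (hR : 0 < R) :
    μH[1] (sphere c R) = ENNReal.ofReal (2 * π * R) := by
  refine le_antisymm ?_ ?_
  · have hsphere : sphere c R = circleMap c R '' Ioc 0 (2 * π) := by
      rw [image_circleMap_Ioc, abs_of_pos hR]
    calc μH[1] (sphere c R) ≤ μH[1] (circleMap c R '' Icc 0 (2 * π)) := by
          rw [hsphere]
          exact measure_mono (image_mono Ioc_subset_Icc_self)
      _ ≤ (Real.nnabs R : ENNReal) ^ (1 : ℝ) * μH[1] (Icc (0 : ℝ) (2 * π)) :=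
          (lipschitzWith_circleMap c R).hausdorffMeasure_image_le zero_le_one _
      _ = ENNReal.ofReal (2 * π * R) := by
          rw [hausdorffMeasure_real, Real.volume_Icc, ENNReal.rpow_one, sub_zero,
            Real.nnabs_of_nonneg hR.le]
          change ENNReal.ofReal R * ENNReal.ofReal (2 * π) = _
          rw [← ENNReal.ofReal_mul hR.le, mul_comm]
  · have hsinc : Tendsto (fun n : ℕ => ENNReal.ofReal (2 * π * R * sinc (π / n))) atTop
        (𝓝 (ENNReal.ofReal (2 * π * R))) := by
      have h := (continuous_sinc.tendsto 0).comp (tendsto_const_div_atTop_nhds_zero_nat π)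
      simpa using (ENNReal.tendsto_ofReal (h.const_mul (2 * π * R)))
    exact le_of_tendsto hsinc ((eventually_ne_atTop 0).mono fun n hn =>
      ofReal_mul_sinc_le_hausdorffMeasure_sphere c hR hn)

end Complex

theorem hausdorffMeasure_sphere_of_finrank_eq_two {E : Type*} [NormedAddCommGroup E]
    [InnerProductSpace ℝ E] [MeasurableSpace E] [BorelSpace E] (hE : Module.finrank ℝ E = 2)
    (x : E) {R : ℝ} (hR : 0 < R) : μH[1] (sphere x R) = ENNReal.ofReal (2 * π * R) := by
  have : FiniteDimensional ℝ E := Module.finite_of_finrank_eq_succ hE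
  let e : ℂ ≃ᵢ E := (Complex.orthonormalBasisOneI.repr.trans
    ((stdOrthonormalBasis ℝ E).reindex (finCongr hE)).repr.symm).toIsometryEquiv
  rw [← e.apply_symm_apply x, ← e.image_sphere, e.hausdorffMeasure_image,
    Complex.hausdorffMeasure_sphere _ hR]

theorem setIntegral_id_closedBall {E : Type*} [NormedAddCommGroup E] [NormedSpace ℝ E]
    [FiniteDimensional ℝ E] [MeasurableSpace E] [BorelSpace E] (μ : Measure E)
    [μ.IsAddHaarMeasure] (c : E) (r : ℝ) :
    ∫ x in closedBall c r, x ∂μ = μ.real (closedBall c r) • c := by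
  -- the point reflection `x ↦ 2c - x` preserves both `μ` and the ball
  have hB : (fun x => (2 : ℝ) • c - x) ⁻¹' closedBall c r = closedBall c r := by
    ext x
    simp only [mem_preimage, mem_closedBall, dist_eq_norm, two_smul]
    rw [← norm_neg]
    congr! 2
    abel
  have hreflect := (Measure.measurePreserving_sub_left μ ((2 : ℝ) • c)).setIntegral_preimage_emb
    (MeasurableEquiv.subLeft ((2 : ℝ) • c)).measurableEmbedding id (closedBall c r)
  have hint : IntegrableOn (fun x => x) (closedBall c r) μ :=
    continuous_id.continuousOn.integrableOn_compact (isCompact_closedBall c r)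
  simp only [hB, id] at hreflect
  have hconst : IntegrableOn (fun _ => (2 : ℝ) • c) (closedBall c r) μ :=
    integrableOn_const measure_closedBall_lt_top.ne
  rw [integral_sub hconst hint,
    setIntegral_const, sub_eq_iff_eq_add, smul_comm, two_smul] at hreflect
  rw [← (smul_right_injective E (two_ne_zero' ℝ)).eq_iff]
  simpa only [two_smul] using hreflect.symm

theorem frontier_union_of_disjoint_closure {X : Type*} [TopologicalSpace X] {s t : Set X}
    (h : Disjoint (closure s) (closure t)) : frontier (s ∪ t) = frontier s ∪ frontier t := by
  have key : ∀ {u v : Set X}, Disjoint (closure u) (closure v) → frontier u ⊆ frontier (u ∪ v) := by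
    intro u v huv
    have hU : IsOpen (closure v)ᶜ := isClosed_closure.isOpen_compl
    have huU : frontier u ⊆ (closure v)ᶜ :=
      frontier_subset_closure.trans (subset_compl_iff_disjoint_right.2 huv)
    have hinter : (u ∪ v) ∩ (closure v)ᶜ = u ∩ (closure v)ᶜ := by
      rw [union_inter_distrib_right,
        (disjoint_compl_right.mono_left subset_closure : Disjoint v (closure v)ᶜ).inter_eq,
        union_empty]
    calc frontier u = frontier u ∩ (closure v)ᶜ := (inter_eq_left.2 huU).symm
      _ = frontier (u ∩ (closure v)ᶜ) ∩ (closure v)ᶜ := (frontier_inter_open_inter hU).symm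
      _ = frontier (u ∪ v) ∩ (closure v)ᶜ := by rw [← hinter, frontier_inter_open_inter hU]
      _ ⊆ frontier (u ∪ v) := inter_subset_left
  refine subset_antisymm ?_ (union_subset (key h) ?_)
  · exact (frontier_union_subset s t).trans
      (union_subset_union inter_subset_left inter_subset_right)
  · rw [union_comm]
    exact key h.symm

namespace EuclideanSpace

theorem measureReal_closedBall_fin_two (x : EuclideanSpace ℝ (Fin 2)) {r : ℝ} (hr : 0 ≤ r) :
    volume.real (closedBall x r) = π * r ^ 2 := by
  rw [measureReal_def, volume_closedBall_fin_two, ENNReal.toReal_mul, ENNReal.toReal_pow,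
    ENNReal.toReal_ofReal hr, ENNReal.toReal_ofReal pi_pos.le, mul_comm]

variable {c₁ c₂ : EuclideanSpace ℝ (Fin 2)} {r₁ r₂ : ℝ}

theorem volume_closedBall_union_closedBall (h : r₁ + r₂ < dist c₁ c₂) (hr₁ : 0 ≤ r₁)
    (hr₂ : 0 ≤ r₂) :
    volume (closedBall c₁ r₁ ∪ closedBall c₂ r₂) = ENNReal.ofReal (π * (r₁ ^ 2 + r₂ ^ 2)) := by
  rw [measure_union (closedBall_disjoint_closedBall h) measurableSet_closedBall,
    ← ofReal_measureReal measure_closedBall_lt_top.ne,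
    ← ofReal_measureReal measure_closedBall_lt_top.ne, measureReal_closedBall_fin_two c₁ hr₁,
    measureReal_closedBall_fin_two c₂ hr₂, ← ENNReal.ofReal_add (by positivity) (by positivity),
    mul_add]

theorem setIntegral_id_closedBall_union_closedBall (h : r₁ + r₂ < dist c₁ c₂) (hr₁ : 0 ≤ r₁)
    (hr₂ : 0 ≤ r₂) :
    ∫ x in closedBall c₁ r₁ ∪ closedBall c₂ r₂, x = (π * r₁ ^ 2) • c₁ + (π * r₂ ^ 2) • c₂ := by
  have hint : ∀ c r, IntegrableOn (fun x : EuclideanSpace ℝ (Fin 2) => x) (closedBall c r) :=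
    fun c r => continuous_id.continuousOn.integrableOn_compact (isCompact_closedBall c r)
  rw [setIntegral_union (closedBall_disjoint_closedBall h) measurableSet_closedBall
    (hint c₁ r₁) (hint c₂ r₂), setIntegral_id_closedBall, setIntegral_id_closedBall,
    measureReal_closedBall_fin_two c₁ hr₁, measureReal_closedBall_fin_two c₂ hr₂]

theorem hausdorffMeasure_frontier_closedBall_union_closedBall (h : r₁ + r₂ < dist c₁ c₂)
    (hr₁ : 0 < r₁) (hr₂ : 0 < r₂) :
    μH[1] (frontier (closedBall c₁ r₁ ∪ closedBall c₂ r₂)) = ENNReal.ofReal (2 * π * (r₁ + r₂)) := by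
  have hdisj := closedBall_disjoint_closedBall h
  have hdim : Module.finrank ℝ (EuclideanSpace ℝ (Fin 2)) = 2 := finrank_euclideanSpace_fin
  rw [frontier_union_of_disjoint_closure (by simpa only [closure_closedBall] using hdisj),
    frontier_closedBall c₁ hr₁.ne', frontier_closedBall c₂ hr₂.ne',
    measure_union (hdisj.mono sphere_subset_closedBall sphere_subset_closedBall)
      isClosed_sphere.measurableSet,
    hausdorffMeasure_sphere_of_finrank_eq_two hdim c₁ hr₁,
    hausdorffMeasure_sphere_of_finrank_eq_two hdim c₂ hr₂,
    ← ENNReal.ofReal_add (by positivity) (by positivity), mul_add]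

end EuclideanSpace

theorem dist_pt_pt (a b : ℝ) : dist (pt a 0) (pt b 0) = |a - b| := by
  rw [EuclideanSpace.dist_eq, Fin.sum_univ_two]
  simp [pt, Real.dist_eq, sqrt_sq_eq_abs]

theorem smul_pt (t a b : ℝ) : t • pt a b = pt (t * a) (t * b) := by
  ext i; fin_cases i <;> simp [pt]

theorem pt_add_pt (a b a' b' : ℝ) : pt a b + pt a' b' = pt (a + a') (b + b') := by
  ext i; fin_cases i <;> simp [pt]

theorem pt_zero : pt 0 0 = 0 := by
  ext i; fin_cases i <;> simp [pt]

noncomputable def dn (n : ℕ) : ℝ := 2 * ((n : ℝ) - 1) ^ 2 / (2 * (n : ℝ) - 1)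

theorem Ωn_eq (n : ℕ) : Ωn n = closedBall (pt 2 0) (Rn n) ∪ closedBall (pt (-dn n) 0) (rn n) :=
  rfl

section Numerics

variable {n : ℕ}

theorem Rn_pos (hn : 2 ≤ n) : 0 < Rn n := by
  have : (2 : ℝ) ≤ n := by exact_mod_cast hn
  rw [Rn, sub_pos, div_lt_one (by linarith)]
  linarith

theorem Rn_lt_one (hn : 2 ≤ n) : Rn n < 1 := by
  have : (2 : ℝ) ≤ n := by exact_mod_cast hn
  rw [Rn, sub_lt_self_iff]
  positivity

theorem rn_sq (hn : 2 ≤ n) : rn n ^ 2 = (2 * n - 1) / n ^ 2 := by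
  have : (2 : ℝ) ≤ n := by exact_mod_cast hn
  rw [rn, div_pow, sq_sqrt (by linarith)]

theorem rn_pos (hn : 2 ≤ n) : 0 < rn n := by
  have : (2 : ℝ) ≤ n := by exact_mod_cast hn
  rw [rn]
  exact div_pos (sqrt_pos.2 (by linarith)) (by linarith)

theorem rn_lt_one (hn : 2 ≤ n) : rn n < 1 := by
  have : (2 : ℝ) ≤ n := by exact_mod_cast hn
  refine (pow_lt_one_iff_of_nonneg (rn_pos hn).le two_ne_zero).1 ?_
  rw [rn_sq hn, div_lt_one (by positivity)]
  nlinarith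

theorem dn_nonneg (hn : 2 ≤ n) : 0 ≤ dn n := by
  have : (2 : ℝ) ≤ n := by exact_mod_cast hn
  rw [dn]
  exact div_nonneg (by positivity) (by linarith)

theorem two_le_dn (hn : 4 ≤ n) : 2 ≤ dn n := by
  have : (4 : ℝ) ≤ n := by exact_mod_cast hn
  rw [dn, le_div_iff₀ (by linarith)]
  nlinarith

theorem Rn_sq_add_rn_sq (hn : 2 ≤ n) : Rn n ^ 2 + rn n ^ 2 = 1 := by
  have : (2 : ℝ) ≤ n := by exact_mod_cast hn
  rw [rn_sq hn, Rn]
  field_simp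
  ring

theorem Rn_sq_mul_two (hn : 2 ≤ n) : Rn n ^ 2 * 2 = rn n ^ 2 * dn n := by
  have : (2 : ℝ) ≤ n := by exact_mod_cast hn
  have : (n : ℝ) ≠ 0 := by positivity
  have h : (2 * n - 1 : ℝ) ≠ 0 := by linarith
  rw [rn_sq hn, Rn, dn, div_mul_div_comm, mul_comm (2 * (n : ℝ) - 1), mul_div_mul_right _ _ h]
  field_simp

theorem Rn_add_rn_lt_dist (hn : 2 ≤ n) : Rn n + rn n < dist (pt 2 0) (pt (-dn n) 0) := by
  rw [dist_pt_pt, abs_of_nonneg (by linarith [dn_nonneg hn])]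
  linarith [Rn_lt_one hn, rn_lt_one hn, dn_nonneg hn]

end Numerics

theorem volume_Ωn {n : ℕ} (hn : 2 ≤ n) : volume (Ωn n) = ENNReal.ofReal π := by
  rw [Ωn_eq, EuclideanSpace.volume_closedBall_union_closedBall (Rn_add_rn_lt_dist hn)
    (Rn_pos hn).le (rn_pos hn).le, Rn_sq_add_rn_sq hn, mul_one]

theorem setIntegral_id_Ωn {n : ℕ} (hn : 2 ≤ n) : ∫ x in Ωn n, x = 0 := by
  rw [Ωn_eq, EuclideanSpace.setIntegral_id_closedBall_union_closedBall (Rn_add_rn_lt_dist hn)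
    (Rn_pos hn).le (rn_pos hn).le, smul_pt, smul_pt, pt_add_pt, ← pt_zero]
  congr 1
  · linear_combination π * Rn_sq_mul_two hn
  · ring

theorem deficit_Ωn {n : ℕ} (hn : 2 ≤ n) :
    ((μH[1] (frontier (Ωn n))).toReal - 2 * π) / (2 * π) = Rn n + rn n - 1 := by
  rw [Ωn_eq, EuclideanSpace.hausdorffMeasure_frontier_closedBall_union_closedBall
    (Rn_add_rn_lt_dist hn) (Rn_pos hn) (rn_pos hn),
    ENNReal.toReal_ofReal (by have := Rn_pos hn; have := rn_pos hn; positivity)]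
  field_simp

theorem tendsto_Rn_add_rn_sub_one : Tendsto (fun n => Rn n + rn n - 1) atTop (𝓝 0) := by
  have hinv : Tendsto (fun n : ℕ => 1 / (n : ℝ)) atTop (𝓝 0) := tendsto_one_div_atTop_nhds_zero_nat
  have hrn : Tendsto (fun n : ℕ => √(2 * (1 / n) - (1 / n) ^ 2)) atTop (𝓝 0) := by
    simpa using ((hinv.const_mul 2).sub (hinv.pow 2)).sqrt
  have hsum := hrn.sub hinv
  rw [sub_zero] at hsum
  refine hsum.congr' ((eventually_ne_atTop 0).mono fun n hn => ?_)
  have hn' : (0 : ℝ) < n := by positivity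
  have hrn_eq : rn n = √(2 * (1 / n) - (1 / n) ^ 2) := by
    rw [rn, show 2 * (1 / n) - (1 / n) ^ 2 = (2 * n - 1) / (n ^ 2 : ℝ) by field_simp,
      sqrt_div' _ (sq_nonneg _), sqrt_sq hn'.le]
  show _ = Rn n + rn n - 1
  rw [Rn, hrn_eq]
  ring

theorem asymmetry_Ωn {n : ℕ} (hn : 4 ≤ n) :
    (volume ((Ωn n \ closedBall (0 : EuclideanSpace ℝ (Fin 2)) 1) ∪
        (closedBall (0 : EuclideanSpace ℝ (Fin 2)) 1 \ Ωn n))).toReal / π = 2 := by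
  have hn2 : 2 ≤ n := by omega
  have hdisj : Disjoint (Ωn n) (closedBall 0 1) := by
    rw [Ωn_eq, ← pt_zero]
    refine Disjoint.union_left (closedBall_disjoint_closedBall ?_)
      (closedBall_disjoint_closedBall ?_)
    · rw [dist_pt_pt, sub_zero, abs_two]
      linarith [Rn_lt_one hn2]
    · rw [dist_pt_pt, sub_zero, abs_neg, abs_of_nonneg (dn_nonneg hn2)]
      linarith [rn_lt_one hn2, two_le_dn hn]
  rw [show Ωn n \ closedBall 0 1 ∪ closedBall 0 1 \ Ωn n = Ωn n ∪ closedBall 0 1 from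
      hdisj.symmDiff_eq_sup, measure_union hdisj measurableSet_closedBall,
    volume_Ωn hn2, EuclideanSpace.volume_closedBall_fin_two, ENNReal.ofReal_one, one_pow,
    one_mul, ← ENNReal.ofReal_add pi_pos.le pi_pos.le, ENNReal.toReal_ofReal (by positivity)]
  field_simp
  ring

/-- The disconnected sets `Ωₙ` have area `π`, barycenter at the origin, De Giorgi
isoperimetric deficit `Rₙ + rₙ - 1 → 0`, and barycentric asymmetry `λ₀(Ωₙ) = 2`
for all large `n`; hence `δ(Ωₙ)/λ₀(Ωₙ)² → 0`. -/
theorem stmt_11 :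
    (∀ n : ℕ, 2 ≤ n → volume (Ωn n) = ENNReal.ofReal Real.pi) ∧
    (∀ n : ℕ, 2 ≤ n → (∫ x in Ωn n, x) = (0 : EuclideanSpace ℝ (Fin 2))) ∧
    (∀ n : ℕ, 2 ≤ n →
      ((μH[1] (frontier (Ωn n))).toReal - 2 * Real.pi) / (2 * Real.pi)
        = Rn n + rn n - 1) ∧
    Filter.Tendsto (fun n : ℕ => Rn n + rn n - 1) Filter.atTop (nhds 0) ∧
    (∀ᶠ n : ℕ in Filter.atTop,
      (volume ((Ωn n \ closedBall (0 : EuclideanSpace ℝ (Fin 2)) 1) ∪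
          (closedBall (0 : EuclideanSpace ℝ (Fin 2)) 1 \ Ωn n))).toReal / Real.pi = 2) ∧
    Filter.Tendsto
      (fun n : ℕ =>
        (((μH[1] (frontier (Ωn n))).toReal - 2 * Real.pi) / (2 * Real.pi)) /
          ((volume ((Ωn n \ closedBall (0 : EuclideanSpace ℝ (Fin 2)) 1) ∪
              (closedBall (0 : EuclideanSpace ℝ (Fin 2)) 1 \ Ωn n))).toReal / Real.pi) ^ 2)
      Filter.atTop (nhds 0) := by
  refine ⟨fun n hn => volume_Ωn hn, fun n hn => setIntegral_id_Ωn hn, fun n hn => deficit_Ωn hn,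
    tendsto_Rn_add_rn_sub_one, eventually_atTop.2 ⟨4, fun n hn => asymmetry_Ωn hn⟩, ?_⟩
  have h := tendsto_Rn_add_rn_sub_one.div_const 4
  rw [zero_div] at h
  refine h.congr' (eventually_atTop.2 ⟨4, fun n hn => ?_⟩)
  simp only [deficit_Ωn (by omega : 2 ≤ n), asymmetry_Ωn hn]
  norm_num
end
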